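/- For multisegments, if ε_i(M) + ε_i*(M) + ⟨wt(M), α_i^∨⟩ ≥ 1, then ε_i*(f_i(M)) = ε_i*(M) and ε_i(f_i*(M)) = ε_i(M). -/

import Mathlib

/-- A segment `[a,b]` is a pair of integers. -/
abbrev Seg : Type := ℕ × ℕ

/-- A multisegment is a finite multiset of segments. -/
abbrev MS : Type := Multiset Seg

/-- `M ∈ MS_n`: all segments `[a,b]` satisfy `1 ≤ a ≤ b ≤ n`. -/
def IsMS (n : ℕ) (M : MS) : Prop := ∀ s ∈ M, 1 ≤ s.1 ∧ s.1 ≤ s.2 ∧ s.2 ≤ n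

/-- A bracket: `op` = "(", `cl` = ")". -/
inductive Br | op | cl
deriving DecidableEq

/-- One step of the left-to-right bracket cancellation procedure.  The state
`(cls, ops)` records the tags of the currently uncanceled ")" (in order) and the
currently uncanceled "(" (in order).  A new "(" is appended to `ops`; a new ")"
cancels the last uncanceled "(" if there is one, and otherwise is appended to `cls`. -/
def step {τ : Type} : (List τ × List τ) → (Br × τ) → (List τ × List τ)
  | (cls, ops), (Br.op, s) => (cls, ops ++ [s])
  | (cls, ops), (Br.cl, s) => if ops.isEmpty then (cls ++ [s], ops) else (cls, ops.dropLast)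

/-- Process a tagged bracket string; the result `(cls, ops)` lists the tags of the
uncanceled ")" and the uncanceled "(" (left to right).  The reduced (uncanceled)
string is `")"^cls.length ++ "("^ops.length`. -/
def scan {τ : Type} (l : List (Br × τ)) : List τ × List τ := l.foldl step ([], [])

/-- Number of uncanceled ")" in a tagged bracket string. -/
def urStr {τ : Type} (l : List (Br × τ)) : ℕ := (scan l).1.length

/-- Number of uncanceled "(" in a tagged bracket string. -/
def epsStr {τ : Type} (l : List (Br × τ)) : ℕ := (scan l).2.length

/-- Tag of the rightmost uncanceled ")", if any. -/
def lastCl {τ : Type} (l : List (Br × τ)) : Option τ := (scan l).1.getLast?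

/-- Tag of the leftmost uncanceled "(", if any. -/
def headOp {τ : Type} (l : List (Br × τ)) : Option τ := (scan l).2.head?

/-- The string `S_i(M)`: segments are ordered by increasing height, then by
decreasing lower endpoint; each `[h,i]` contributes "(" and each `[h,i-1]`
contributes ")".  In the block of segments of height `t` the "(" over the
`[i-t+1, i]` segments come immediately before the ")" over the `[i-t, i-1]`
segments, and blocks appear for `t = 1, 2, …`. -/
def Si (M : MS) (i : ℕ) : List (Br × Seg) :=
  (List.range i).flatMap fun t0 =>
    let t := t0 + 1
    List.replicate (M.count (i - t + 1, i)) (Br.op, ((i - t + 1 : ℕ), i)) ++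
    List.replicate (M.count (i - t, i - 1)) (Br.cl, ((i - t : ℕ), i - 1))

/-- The string `S_i^*(M)`: segments ordered by increasing height, then by
increasing lower endpoint; each `[i,j]` contributes "(" and each `[i+1,j]`
contributes ")".  In the block of height `t` the "(" below the `[i, i+t-1]`
segments come immediately before the ")" below the `[i+1, i+t]` segments. -/
def SiStar (n : ℕ) (M : MS) (i : ℕ) : List (Br × Seg) :=
  (List.range n).flatMap fun t0 =>
    let t := t0 + 1
    List.replicate (M.count (i, i + t - 1)) (Br.op, (i, i + t - 1)) ++
    List.replicate (M.count (i + 1, i + t)) (Br.cl, (i + 1, i + t))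

/-- The crystal operator `f_i` on multisegments: it changes the segment `[h,i-1]`
under the rightmost uncanceled ")" of `S_i(M)` into `[h,i]`, or adds a new
segment `[i,i]` if there is no uncanceled ")". -/
def fM (i : ℕ) (M : MS) : MS :=
  match lastCl (Si M i) with
  | some s => M.erase s + {(s.1, i)}
  | none => M + {(i, i)}

/-- The crystal operator `e_i` on multisegments: it changes the segment `[h,i]`
under the leftmost uncanceled "(" of `S_i(M)` into `[h,i-1]` (deleting it when
`h = i`), or returns `none` (i.e. `0`) if there is no uncanceled "(". -/
def eM (i : ℕ) (M : MS) : Option MS :=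
  match headOp (Si M i) with
  | some s => some (if s.1 = i then M.erase s else M.erase s + {(s.1, i - 1)})
  | none => none

/-- The operator `f_i^*`: it changes the segment `[i+1,j]` under the rightmost
uncanceled ")" of `S_i^*(M)` into `[i,j]`, or adds `[i,i]` if there is none. -/
def fMStar (n i : ℕ) (M : MS) : MS :=
  match lastCl (SiStar n M i) with
  | some s => M.erase s + {(i, s.2)}
  | none => M + {(i, i)}

/-- The operator `e_i^*`: it changes the segment `[i,j]` under the leftmost
uncanceled "(" of `S_i^*(M)` into `[i+1,j]` (deleting it when `j = i`), or
returns `none` if there is no uncanceled "(". -/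
def eMStar (n i : ℕ) (M : MS) : Option MS :=
  match headOp (SiStar n M i) with
  | some s => some (if s.2 = i then M.erase s else M.erase s + {(i + 1, s.2)})
  | none => none

/-- The number of boxes labeled `j` in `M`: each segment `[a,b]` contains one
box labeled `j` for each `a ≤ j ≤ b`. -/
def boxes (M : MS) (j : ℕ) : ℕ :=
  (M.filter (fun s => s.1 ≤ j ∧ j ≤ s.2)).card

/-- The pairing `⟨wt(M), α_i^∨⟩ = #(boxes i-1) + #(boxes i+1) - 2 #(boxes i)`. -/
def wtPair (M : MS) (i : ℕ) : ℤ :=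
  (boxes M (i - 1) : ℤ) + (boxes M (i + 1) : ℤ) - 2 * (boxes M i : ℤ)

/-!
Cancelling brackets reduces a string to `)^φ (^ε`, so `ε - φ = #"(" - #")"`. Counting the
brackets of `S_i(M)` and `S_i^*(M)` segment by segment gives
`ε_i + ε_i^* + ⟨wt M, α_i^∨⟩ = φ_i + φ_i^*`, so the hypothesis says that one of the two strings
has an uncanceled ")". If `f_i` turns `[h,i-1]` into `[h,i]`, then `h < i` and no segment starting
at `i` or `i+1` is touched, so `S_i^*(M)` does not change. Otherwise `φ_i = 0` and `f_i` adds
`[i,i]`, whose "(" stands at the front of `S_i^*(M)` and cancels its first uncanceled ")", which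
exists since `φ_i^* ≠ 0`; so `ε_i^*` does not change. The case of `f_i^*` is symmetric.
-/

section Brackets

variable {τ : Type}

def countOp (l : List (Br × τ)) : ℕ := l.countP (·.1 = Br.op)

def countCl (l : List (Br × τ)) : ℕ := l.countP (·.1 = Br.cl)

theorem foldl_step_balance (l : List (Br × τ)) (cls ops : List τ) :
    (l.foldl step (cls, ops)).2.length + cls.length + countCl l =
      (l.foldl step (cls, ops)).1.length + ops.length + countOp l := by
  induction l generalizing cls ops with
  | nil => simp [countCl, countOp]; omega
  | cons b l ih =>
    obtain ⟨_ | _, s⟩ := b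
    · have := ih cls (ops ++ [s])
      simp [step, countCl, countOp] at this ⊢
      omega
    · rcases ops.eq_nil_or_concat with rfl | ⟨ops, o, rfl⟩
      · have := ih (cls ++ [s]) []
        simp [step, countCl, countOp] at this ⊢
        omega
      · have := ih cls ops
        simp [step, countCl, countOp] at this ⊢
        omega

theorem epsStr_add_countCl (l : List (Br × τ)) : epsStr l + countCl l = urStr l + countOp l := by
  simpa [epsStr, urStr, scan] using foldl_step_balance l [] []

theorem foldl_step_eq_append (l : List (Br × τ)) (cls ops : List τ) :
    l.foldl step (cls, ops) = (cls ++ (l.foldl step ([], ops)).1, (l.foldl step ([], ops)).2) := by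
  induction l generalizing cls ops with
  | nil => simp
  | cons b l ih =>
    obtain ⟨_ | _, s⟩ := b
    · exact ih cls (ops ++ [s])
    · simp only [List.foldl_cons, step]
      split
      · rw [List.nil_append, ih (cls ++ [s]), ih [s], List.append_assoc]
      · exact ih cls ops.dropLast

/-- An extra "(" at the front of the string cancels the first uncanceled ")", if there is one. -/
theorem foldl_step_nil_cons (l : List (Br × τ)) (s : τ) (ops : List τ) :
    l.foldl step ([], s :: ops) =
      if (l.foldl step ([], ops)).1.isEmpty then ([], s :: (l.foldl step ([], ops)).2)
      else ((l.foldl step ([], ops)).1.tail, (l.foldl step ([], ops)).2) := by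
  induction l generalizing ops with
  | nil => simp
  | cons b l ih =>
    obtain ⟨_ | _, a⟩ := b
    · exact ih (ops ++ [a])
    · cases ops with
      | nil =>
        simp only [List.foldl_cons, step, List.isEmpty_nil, List.isEmpty_cons,
          List.dropLast_singleton, List.nil_append, if_true, Bool.false_eq_true, if_false]
        rw [foldl_step_eq_append l [a]]
        simp
      | cons o t =>
        simp only [List.foldl_cons, step, List.isEmpty_cons, Bool.false_eq_true, if_false]
        rw [List.dropLast_cons_cons]
        exact ih (o :: t).dropLast

theorem epsStr_cons_op (l : List (Br × τ)) (s : τ) (h : urStr l ≠ 0) :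
    epsStr ((Br.op, s) :: l) = epsStr l := by
  have hne : (scan l).1.isEmpty = false := by
    simpa [urStr, List.isEmpty_iff, ← List.length_eq_zero_iff] using h
  simp only [epsStr, scan, List.foldl_cons, step, List.nil_append]
  rw [foldl_step_nil_cons l s [], ← scan, hne]
  rfl

theorem mem_foldl_step_fst (l : List (Br × τ)) (cls ops : List τ) {x : τ}
    (hx : x ∈ (l.foldl step (cls, ops)).1) : x ∈ cls ∨ (Br.cl, x) ∈ l := by
  induction l generalizing cls ops with
  | nil => exact Or.inl hx
  | cons b l ih =>
    obtain ⟨_ | _, a⟩ := b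
    · exact (ih _ _ hx).imp_right (List.mem_cons_of_mem _)
    · simp only [List.foldl_cons, step] at hx
      split at hx
      · rcases ih _ _ hx with h | h
        · simp only [List.mem_append, List.mem_singleton] at h
          rcases h with h | rfl
          · exact Or.inl h
          · exact Or.inr List.mem_cons_self
        · exact Or.inr (List.mem_cons_of_mem _ h)
      · exact (ih _ _ hx).imp_right (List.mem_cons_of_mem _)

theorem lastCl_mem {l : List (Br × τ)} {s : τ} (h : lastCl l = some s) : (Br.cl, s) ∈ l :=
  (mem_foldl_step_fst l [] [] (List.mem_of_mem_getLast? h)).resolve_left List.not_mem_nil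

theorem urStr_eq_zero_of_lastCl_eq_none {l : List (Br × τ)} (h : lastCl l = none) :
    urStr l = 0 := by
  simpa [lastCl, urStr] using h

end Brackets

theorem sum_map_range_eq_sum_range {β : Type*} [AddCommMonoid β] (f : ℕ → β) (m : ℕ) :
    ((List.range m).map f).sum = ∑ t ∈ Finset.range m, f t := by
  rw [Finset.sum_eq_multiset_sum, Finset.range_val, ← Multiset.coe_range, Multiset.map_coe,
    Multiset.sum_coe]

theorem Multiset.sum_range_count_eq_countP {α : Type*} [DecidableEq α] (M : Multiset α) {m : ℕ}
    {k : ℕ → α} (hk : Set.InjOn k (Set.Iio m)) {p : α → Prop} [DecidablePred p]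
    (hp : ∀ a, p a ↔ ∃ t < m, k t = a) :
    ∑ t ∈ Finset.range m, M.count (k t) = M.countP p := by
  have hmem : ∀ a, a ∈ (Finset.range m).image k ↔ p a := by simp [hp]
  rw [← Finset.sum_image (f := fun a => M.count a) (by simpa using hk),
    Multiset.countP_eq_card_filter,
    ← Multiset.sum_count_eq_card (s := (Finset.range m).image k) (by simp [hmem])]
  exact Finset.sum_congr rfl fun a ha => (Multiset.count_filter_of_pos ((hmem a).1 ha)).symm

theorem Multiset.count_erase_add_singleton {α : Type*} [DecidableEq α] (M : Multiset α)
    {s b x : α} (hs : x ≠ s) (hb : x ≠ b) : (M.erase s + {b}).count x = M.count x := by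
  rw [Multiset.count_add, Multiset.count_erase_of_ne hs, Multiset.count_singleton, if_neg hb,
    add_zero]

section BlockString

variable {α : Type} [DecidableEq α]

def blockString (M : Multiset α) (m : ℕ) (o c : ℕ → α) : List (Br × α) :=
  (List.range m).flatMap fun t =>
    List.replicate (M.count (o t)) (Br.op, o t) ++ List.replicate (M.count (c t)) (Br.cl, c t)

theorem Si_eq_blockString (M : MS) (i : ℕ) :
    Si M i = blockString M i (fun t => (i - t, i)) (fun t => (i - (t + 1), i - 1)) := by
  refine List.flatMap_congr fun t ht => ?_
  rw [List.mem_range] at ht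
  simp only [show i - (t + 1) + 1 = i - t by omega]

theorem SiStar_eq_blockString (n : ℕ) (M : MS) (i : ℕ) :
    SiStar n M i = blockString M n (fun t => (i, i + t)) (fun t => (i + 1, i + (t + 1))) := rfl

theorem countOp_blockString (M : Multiset α) (m : ℕ) (o c : ℕ → α) :
    countOp (blockString M m o c) = ∑ t ∈ Finset.range m, M.count (o t) := by
  simp only [countOp, blockString, List.countP_flatMap, Function.comp_def, List.countP_append,
    List.countP_replicate]
  simp [sum_map_range_eq_sum_range]

theorem countCl_blockString (M : Multiset α) (m : ℕ) (o c : ℕ → α) :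
    countCl (blockString M m o c) = ∑ t ∈ Finset.range m, M.count (c t) := by
  simp only [countCl, blockString, List.countP_flatMap, Function.comp_def, List.countP_append,
    List.countP_replicate]
  simp [sum_map_range_eq_sum_range]

theorem blockString_congr {M M' : Multiset α} {m : ℕ} {o c : ℕ → α}
    (ho : ∀ t < m, M.count (o t) = M'.count (o t)) (hc : ∀ t < m, M.count (c t) = M'.count (c t)) :
    blockString M m o c = blockString M' m o c :=
  List.flatMap_congr fun t ht => by
    rw [List.mem_range] at ht
    rw [ho t ht, hc t ht]

theorem blockString_succ (M : Multiset α) (m : ℕ) (o c : ℕ → α) :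
    blockString M (m + 1) o c =
      List.replicate (M.count (o 0)) (Br.op, o 0) ++ List.replicate (M.count (c 0)) (Br.cl, c 0) ++
        blockString M m (o ∘ Nat.succ) (c ∘ Nat.succ) := by
  simp only [blockString, List.range_succ_eq_map, List.flatMap_cons, List.flatMap_map]
  rfl

theorem blockString_add_singleton {M : Multiset α} {m : ℕ} {o c : ℕ → α} (hm : m ≠ 0)
    (ho : ∀ t < m, t ≠ 0 → o t ≠ o 0) (hc : ∀ t < m, c t ≠ o 0) :
    blockString (M + {o 0}) m o c = (Br.op, o 0) :: blockString M m o c := by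
  obtain ⟨m, rfl⟩ := Nat.exists_eq_succ_of_ne_zero hm
  have htail : blockString (M + {o 0}) m (o ∘ Nat.succ) (c ∘ Nat.succ) =
      blockString M m (o ∘ Nat.succ) (c ∘ Nat.succ) :=
    blockString_congr (fun t ht => by simp [ho (t + 1) (by omega) (by omega)])
      (fun t ht => by simp [hc (t + 1) (by omega)])
  rw [blockString_succ, blockString_succ, htail]
  simp [hc 0 (by omega), List.replicate_succ]

theorem lastCl_blockString {M : Multiset α} {m : ℕ} {o c : ℕ → α} {s : α}
    (h : lastCl (blockString M m o c) = some s) : ∃ t < m, c t = s := by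
  obtain ⟨t, ht, -, rfl⟩ : ∃ t < m, c t ∈ M ∧ s = c t := by
    simpa [blockString] using lastCl_mem h
  exact ⟨t, ht, rfl⟩

end BlockString

section BracketCounts

variable (n i : ℕ) (M : MS)

theorem countOp_Si : countOp (Si M i) = M.countP (fun s => s.2 = i ∧ 1 ≤ s.1 ∧ s.1 ≤ i) := by
  rw [Si_eq_blockString, countOp_blockString]
  refine Multiset.sum_range_count_eq_countP M (fun t ht t' ht' h => ?_) fun s => ?_
  · simp only [Set.mem_Iio, Prod.mk.injEq] at ht ht' h; omega
  · exact ⟨fun ⟨h2, h1, h3⟩ => ⟨i - s.1, by omega, Prod.ext (by simp; omega) h2.symm⟩,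
      by rintro ⟨t, ht, rfl⟩; simp; omega⟩

theorem countCl_Si : countCl (Si M i) = M.countP (fun s => s.2 + 1 = i ∧ s.1 ≤ s.2) := by
  rw [Si_eq_blockString, countCl_blockString]
  refine Multiset.sum_range_count_eq_countP M (fun t ht t' ht' h => ?_) fun s => ?_
  · simp only [Set.mem_Iio, Prod.mk.injEq] at ht ht' h; omega
  · exact ⟨fun ⟨h2, h1⟩ => ⟨s.2 - s.1, by omega, Prod.ext (by simp; omega) (by simp; omega)⟩,
      by rintro ⟨t, ht, rfl⟩; simp; omega⟩

theorem countOp_SiStar :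
    countOp (SiStar n M i) = M.countP (fun s => s.1 = i ∧ i ≤ s.2 ∧ s.2 < i + n) := by
  rw [SiStar_eq_blockString, countOp_blockString]
  refine Multiset.sum_range_count_eq_countP M (fun t ht t' ht' h => ?_) fun s => ?_
  · simp only [Set.mem_Iio, Prod.mk.injEq] at ht ht' h; omega
  · exact ⟨fun ⟨h1, h2, h3⟩ => ⟨s.2 - i, by omega, Prod.ext h1.symm (by simp; omega)⟩,
      by rintro ⟨t, ht, rfl⟩; simp; omega⟩

theorem countCl_SiStar :
    countCl (SiStar n M i) = M.countP (fun s => s.1 = i + 1 ∧ i + 1 ≤ s.2 ∧ s.2 ≤ i + n) := by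
  rw [SiStar_eq_blockString, countCl_blockString]
  refine Multiset.sum_range_count_eq_countP M (fun t ht t' ht' h => ?_) fun s => ?_
  · simp only [Set.mem_Iio, Prod.mk.injEq] at ht ht' h; omega
  · exact ⟨fun ⟨h1, h2, h3⟩ => ⟨s.2 - (i + 1), by omega, Prod.ext h1.symm (by simp; omega)⟩,
      by rintro ⟨t, ht, rfl⟩; simp; omega⟩

theorem countOp_add_boxes_eq_countCl_add_boxes (hM : IsMS n M) :
    countOp (Si M i) + countOp (SiStar n M i) + boxes M (i - 1) + boxes M (i + 1) =
      countCl (Si M i) + countCl (SiStar n M i) + 2 * boxes M i := by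
  simp only [countOp_Si, countCl_Si, countOp_SiStar, countCl_SiStar, boxes,
    ← Multiset.countP_eq_card_filter]
  induction M using Multiset.induction_on with
  | empty => simp
  | cons a M ih =>
    obtain ⟨ha1, ha2, ha3⟩ := hM a (Multiset.mem_cons_self a M)
    have := ih fun s hs => hM s (Multiset.mem_cons_of_mem hs)
    simp only [Multiset.countP_cons]
    split_ifs <;> omega

end BracketCounts

section CrystalOperators

variable {n i : ℕ} {M : MS}

theorem epsStr_add_epsStr_add_wtPair (hM : IsMS n M) :
    (epsStr (Si M i) : ℤ) + epsStr (SiStar n M i) + wtPair M i =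
      urStr (Si M i) + urStr (SiStar n M i) := by
  have hSi := epsStr_add_countCl (Si M i)
  have hSiStar := epsStr_add_countCl (SiStar n M i)
  have hcount := countOp_add_boxes_eq_countCl_add_boxes n i M hM
  unfold wtPair
  omega

theorem epsStr_SiStar_fM (h : urStr (Si M i) + urStr (SiStar n M i) ≠ 0) :
    epsStr (SiStar n (fM i M) i) = epsStr (SiStar n M i) := by
  unfold fM
  cases hc : lastCl (Si M i) with
  | none =>
    have hur : urStr (SiStar n M i) ≠ 0 := by
      have := urStr_eq_zero_of_lastCl_eq_none hc
      omega
    have hn : n ≠ 0 := by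
      rintro rfl
      exact hur rfl
    have hins : SiStar n (M + {(i, i)}) i = (Br.op, (i, i)) :: SiStar n M i :=
      blockString_add_singleton hn (fun t _ ht => by simpa using ht) (fun t _ => by simp)
    rw [hins, epsStr_cons_op _ _ hur]
  | some s =>
    obtain ⟨t, ht, rfl⟩ := lastCl_blockString (Si_eq_blockString M i ▸ hc)
    simp only [SiStar_eq_blockString]
    congr 1
    refine blockString_congr (fun u _ => ?_) (fun u _ => ?_) <;>
      exact Multiset.count_erase_add_singleton M (by simp only [ne_eq, Prod.mk.injEq]; omega)
        (by simp only [ne_eq, Prod.mk.injEq]; omega)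

theorem epsStr_Si_fMStar (h : urStr (Si M i) + urStr (SiStar n M i) ≠ 0) :
    epsStr (Si (fMStar n i M) i) = epsStr (Si M i) := by
  unfold fMStar
  cases hc : lastCl (SiStar n M i) with
  | none =>
    have hur : urStr (Si M i) ≠ 0 := by
      have := urStr_eq_zero_of_lastCl_eq_none hc
      omega
    have hi : i ≠ 0 := by
      rintro rfl
      exact hur rfl
    have hins : Si (M + {(i, i)}) i = (Br.op, (i, i)) :: Si M i := by
      simp only [Si_eq_blockString]
      exact blockString_add_singleton hi (fun t ht ht0 => by simp; omega)
        (fun t _ => by simp; omega)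
    rw [hins, epsStr_cons_op _ _ hur]
  | some s =>
    obtain ⟨t, ht, rfl⟩ := lastCl_blockString (SiStar_eq_blockString n M i ▸ hc)
    simp only [Si_eq_blockString]
    congr 1
    refine blockString_congr (fun u _ => ?_) (fun u _ => ?_) <;>
      exact Multiset.count_erase_add_singleton M (by simp only [ne_eq, Prod.mk.injEq]; omega)
        (by simp only [ne_eq, Prod.mk.injEq]; omega)

end CrystalOperators

theorem stmt10_general (n i : ℕ) (M : MS) (hM : IsMS n M)
    (h : 1 ≤ (epsStr (Si M i) : ℤ) + (epsStr (SiStar n M i) : ℤ) + wtPair M i) :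
    epsStr (SiStar n (fM i M) i) = epsStr (SiStar n M i) ∧
    epsStr (Si (fMStar n i M) i) = epsStr (Si M i) := by
  have hur : urStr (Si M i) + urStr (SiStar n M i) ≠ 0 := by
    have := epsStr_add_epsStr_add_wtPair (i := i) hM
    omega
  exact ⟨epsStr_SiStar_fM hur, epsStr_Si_fMStar hur⟩

theorem stmt10 (n i : ℕ) (hi : 1 ≤ i) (hin : i ≤ n) (M : MS) (hM : IsMS n M)
    (h : 1 ≤ (epsStr (Si M i) : ℤ) + (epsStr (SiStar n M i) : ℤ) + wtPair M i) :
    epsStr (SiStar n (fM i M) i) = epsStr (SiStar n M i) ∧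
    epsStr (Si (fMStar n i M) i) = epsStr (Si M i) :=
  stmt10_general n i M hM h
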